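/- arXiv:2511.09418 — 2 statements merged into one kernel-verified Lean document; each statement's English description precedes it below -/
import Mathlib

section
/- Let M, N be positive integers and Δ an integer such that gcd(2Δ, MN) = N. Then for k₁, k₂ ∈ {0,…,M−1} and l₁, l₂ ∈ {0,…,N−1}, the congruence 2Δ(k₁−k₂) + (l₂−l₁) ≡ 0 (mod MN) holds if and only if k₁ = k₂ and l₁ = l₂. -/
/-- Strong crystallization condition: if `gcd(2Δ, MN) = N`, then for
`k₁, k₂ ∈ {0,…,M−1}` and `l₁, l₂ ∈ {0,…,N−1}`, the congruence
`2Δ(k₁−k₂) + (l₂−l₁) ≡ 0 (mod MN)` holds iff `k₁ = k₂` and `l₁ = l₂`. -/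
theorem strong_crystallization (M N : ℕ) (hM : 0 < M) (hN : 0 < N) (Δ : ℤ)
    (hgcd : Int.gcd (2 * Δ) (M * N : ℤ) = N)
    (k₁ k₂ l₁ l₂ : ℕ) (hk₁ : k₁ < M) (hk₂ : k₂ < M) (hl₁ : l₁ < N) (hl₂ : l₂ < N) :
    ((M * N : ℤ) ∣ 2 * Δ * ((k₁ : ℤ) - k₂) + ((l₂ : ℤ) - l₁)) ↔ (k₁ = k₂ ∧ l₁ = l₂) := by
  constructor
  · intro hdvd
    -- N divides 2Δ
    have hN2 : (N : ℤ) ∣ 2 * Δ := by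
      have h := Int.gcd_dvd_left (a := 2 * Δ) (b := (M * N : ℤ))
      rwa [hgcd] at h
    obtain ⟨d, hd⟩ := hN2
    -- gcd(d, M) = 1
    have hco : IsCoprime d (M : ℤ) := by
      have h1 : Int.gcd ((N:ℤ) * d) ((N:ℤ) * M) = N := by
        rw [← hd]
        have : (M : ℤ) * N = (N : ℤ) * M := by ring
        rw [← this]; exact hgcd
      rw [Int.gcd_mul_left] at h1
      simp only [Int.natAbs_natCast] at h1
      have h2 : N * Int.gcd d (M : ℤ) = N * 1 := by simpa using h1
      exact Int.isCoprime_iff_gcd_eq_one.mpr (Nat.eq_of_mul_eq_mul_left hN h2)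
    -- N ∣ l₂ - l₁
    have hNl : (N : ℤ) ∣ ((l₂ : ℤ) - l₁) := by
      have h1 : (N : ℤ) ∣ 2 * Δ * ((k₁ : ℤ) - k₂) + ((l₂ : ℤ) - l₁) :=
        dvd_trans ⟨M, by ring⟩ hdvd
      have h2 : (N : ℤ) ∣ 2 * Δ * ((k₁ : ℤ) - k₂) := Dvd.dvd.mul_right ⟨d, hd⟩ _
      exact (dvd_add_right h2).mp h1
    have hl : l₁ = l₂ := by
      have := Int.eq_zero_of_abs_lt_dvd hNl (by rw [abs_lt]; omega)
      omega
    subst hl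
    -- now MN ∣ N d (k₁ - k₂), cancel N
    have hMk : (M : ℤ) ∣ d * ((k₁ : ℤ) - k₂) := by
      have h1 : (M : ℤ) * N ∣ (N : ℤ) * (d * ((k₁:ℤ) - k₂)) := by
        have : (N : ℤ) * (d * ((k₁:ℤ) - k₂)) = 2 * Δ * ((k₁ : ℤ) - k₂) := by
          rw [hd]; ring
        rw [this]
        simpa using hdvd
      have h2 : (N : ℤ) * M ∣ (N : ℤ) * (d * ((k₁:ℤ) - k₂)) := by
        rwa [mul_comm (N:ℤ) M]
      exact (mul_dvd_mul_iff_left (by positivity : (N:ℤ) ≠ 0)).mp h2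
    have hMk2 : (M : ℤ) ∣ ((k₁ : ℤ) - k₂) := hco.symm.dvd_of_dvd_mul_left hMk
    have hk : k₁ = k₂ := by
      have := Int.eq_zero_of_abs_lt_dvd hMk2 (by rw [abs_lt]; omega)
      omega
    exact ⟨hk, rfl⟩
  · rintro ⟨rfl, rfl⟩
    simp
end

section
/- For the ODDM basis φ_i[n] = (1/√N)·e^{(2πi/N)·⌊i/M⌋·⌊n/M⌋}·1{n ≡ i (mod M)} on Z_{MN}, and for any k₁, k₂ ∈ {0,…,M−1}, l₁, l₂ ∈ {0,…,N−1}, the quantity S_i = ∑_{n=0}^{MN−1} φ_i[(n−k₂) mod MN]·conj(φ_i[(n−k₁) mod MN])·e^{(2πi/(MN))·(l₂−l₁)·n} does not depend on the carrier index i ∈ {0,…,MN−1}. -/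
open Complex Finset

/-- The ODDM basis element on `Z_{MN}`. -/
noncomputable def oddmBasis (M N : ℕ) (i n : ℕ) : ℂ :=
  if n % M = i % M then
    (1 / Real.sqrt N) *
      Complex.exp (2 * Real.pi * Complex.I * ((i / M : ℕ) * (n / M : ℕ) : ℕ) / N)
  else 0

/-- The non-selectivity sum `S_i` for the ODDM basis, with delay shifts
`k₁, k₂` and Doppler shifts `l₁, l₂` (`(n − k) mod MN` realized as
`(n + MN − k) % (MN)` for `k < M ≤ MN`). -/
noncomputable def oddmSum (M N : ℕ) (k₁ k₂ l₁ l₂ : ℕ) (i : ℕ) : ℂ :=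
  ∑ n ∈ Finset.range (M * N),
    oddmBasis M N i ((n + M * N - k₂) % (M * N)) *
      (starRingEnd ℂ) (oddmBasis M N i ((n + M * N - k₁) % (M * N))) *
      Complex.exp (2 * Real.pi * Complex.I * ((l₂ : ℤ) - (l₁ : ℤ)) * n / (M * N))

/-!
For `k₁ ≠ k₂ < M` every term of `S_i` vanishes, since `φ_i[· − k]` is supported on the residue
class of `i + k` mod `M`. For `k₁ = k₂` the chirp phase of `φ_i` cancels against its conjugate,
leaving `1/N` times the sum of `e^{2πi(l₂−l₁)n/(MN)}` over one residue class mod `M`. Writing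
`n = Mr + c`, this is a geometric sum in the `N`-th root of unity `e^{2πi(l₂−l₁)/N}`, which vanishes
unless `l₁ = l₂` because `|l₂ − l₁| < N`. Hence `S_i = [k₁ = k₂ ∧ l₁ = l₂]` for every `i`.
-/

open Real ComplexConjugate

lemma sum_range_exp_eq_zero {N : ℕ} {Δ : ℤ} (hΔ : ¬ (N : ℤ) ∣ Δ) :
    ∑ r ∈ range N, exp (2 * π * I * Δ * r / N) = 0 := by
  obtain rfl | hN := eq_or_ne N 0
  · simp
  have hζ := isPrimitiveRoot_exp N hN
  have hz : ∀ r : ℕ, exp (2 * π * I * Δ * r / N) = (exp (2 * π * I / N) ^ Δ) ^ r := fun r => by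
    rw [← zpow_natCast, ← zpow_mul, ← exp_int_mul]
    congr 1
    push_cast
    ring
  have hz1 : exp (2 * π * I / N) ^ Δ ≠ 1 := fun h => hΔ ((hζ.zpow_eq_one_iff_dvd Δ).1 h)
  have hzN : (exp (2 * π * I / N) ^ Δ) ^ N = 1 := by
    rw [← zpow_natCast, ← zpow_mul, mul_comm Δ, zpow_mul, zpow_natCast, hζ.pow_eq_one, one_zpow]
  rw [sum_congr rfl fun r _ => hz r, geom_sum_eq hz1, hzN, sub_self, zero_div]

lemma sum_filter_modEq_eq_sum_range {β : Type*} [AddCommMonoid β] {M : ℕ} (hM : M ≠ 0)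
    (N c : ℕ) (f : ℕ → β) :
    ∑ n ∈ range (M * N) with n ≡ c [MOD M], f n = ∑ r ∈ range N, f (M * r + c % M) := by
  have hc : c % M < M := Nat.mod_lt c (Nat.pos_of_ne_zero hM)
  have hdiv : ∀ n, n ≡ c [MOD M] → M * (n / M) + c % M = n := fun n hn => hn ▸ Nat.div_add_mod n M
  refine sum_nbij' (· / M) (M * · + c % M) ?_ ?_ ?_ ?_ ?_
  · intro n hn
    simp only [mem_filter, mem_range] at hn ⊢
    exact Nat.div_lt_of_lt_mul hn.1
  · intro r hr
    simp only [mem_filter, mem_range] at hr ⊢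
    refine ⟨by nlinarith, ?_⟩
    rw [Nat.ModEq, Nat.mul_add_mod, Nat.mod_mod]
  · intro n hn
    exact hdiv n (mem_filter.1 hn).2
  · intro r _
    rw [Nat.mul_add_div (Nat.pos_of_ne_zero hM), Nat.div_eq_of_lt hc, add_zero]
  · intro n hn
    rw [hdiv n (mem_filter.1 hn).2]

lemma sum_filter_modEq_exp_eq_zero {M N : ℕ} (hM : M ≠ 0) (c : ℕ) {Δ : ℤ}
    (hΔ : ¬ (N : ℤ) ∣ Δ) :
    ∑ n ∈ range (M * N) with n ≡ c [MOD M], exp (2 * π * I * Δ * n / (M * N)) = 0 := by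
  obtain rfl | hN := eq_or_ne N 0
  · simp
  have hsplit : ∀ r : ℕ, exp (2 * π * I * Δ * (M * r + c % M : ℕ) / (M * N)) =
      exp (2 * π * I * Δ * (c % M : ℕ) / (M * N)) * exp (2 * π * I * Δ * r / N) := fun r => by
    rw [← Complex.exp_add]
    congr 1
    push_cast
    field_simp
    ring
  simp only [sum_filter_modEq_eq_sum_range hM, hsplit, ← mul_sum, sum_range_exp_eq_zero hΔ,
    mul_zero]

lemma oddmBasis_eq_zero {M N i a : ℕ} (h : ¬ a ≡ i [MOD M]) : oddmBasis M N i a = 0 :=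
  if_neg h

lemma oddmBasis_mul_conj_self (M N i a : ℕ) :
    oddmBasis M N i a * conj (oddmBasis M N i a) = if a ≡ i [MOD M] then (N : ℂ)⁻¹ else 0 := by
  by_cases h : a ≡ i [MOD M]
  · have hre : (2 * π * I * (i / M * (a / M) : ℕ) / N : ℂ).re = 0 := by simp
    rw [if_pos h, oddmBasis, if_pos (show a % M = i % M from h), mul_conj', norm_mul, norm_exp,
      hre, Real.exp_zero, mul_one, norm_div, norm_one, norm_real, norm_of_nonneg (sqrt_nonneg _)]
    push_cast
    rw [div_pow, one_pow, ← ofReal_pow, sq_sqrt (Nat.cast_nonneg N), ofReal_natCast, one_div]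
  · rw [if_neg h, oddmBasis_eq_zero h, zero_mul]

lemma shift_mod_modEq_iff {M N k n i : ℕ} (hk : k < M) (hn : n < M * N) :
    (n + M * N - k) % (M * N) ≡ i [MOD M] ↔ n ≡ i + k [MOD M] := by
  have hkn : k ≤ n + M * N := by
    have : 0 < N := Nat.pos_of_ne_zero (by rintro rfl; simp at hn)
    nlinarith
  unfold Nat.ModEq
  rw [Nat.mod_mod_of_dvd _ (dvd_mul_right M N), ← Nat.add_mul_mod_self_left n M N]
  conv_rhs => rw [← Nat.sub_add_cancel hkn]
  exact ⟨fun h => Nat.ModEq.add_right k h, Nat.ModEq.add_right_cancel' k⟩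

lemma oddmSum_eq_zero_of_ne {M N k₁ k₂ : ℕ} (l₁ l₂ i : ℕ) (hk₁ : k₁ < M) (hk₂ : k₂ < M)
    (hk : k₁ ≠ k₂) : oddmSum M N k₁ k₂ l₁ l₂ i = 0 := by
  refine sum_eq_zero fun n hn => ?_
  have hn := mem_range.1 hn
  by_cases h₂ : n ≡ i + k₂ [MOD M]
  · have h₁ : ¬ n ≡ i + k₁ [MOD M] := fun h₁ =>
      hk (((h₁.symm.trans h₂).add_left_cancel' i).eq_of_lt_of_lt hk₁ hk₂)
    rw [oddmBasis_eq_zero ((shift_mod_modEq_iff hk₁ hn).not.2 h₁), map_zero, mul_zero, zero_mul]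
  · rw [oddmBasis_eq_zero ((shift_mod_modEq_iff hk₂ hn).not.2 h₂), zero_mul, zero_mul]

lemma oddmSum_self {M : ℕ} (N l₁ l₂ i : ℕ) {k : ℕ} (hk : k < M) :
    oddmSum M N k k l₁ l₂ i = (N : ℂ)⁻¹ * ∑ n ∈ range (M * N) with n ≡ i + k [MOD M],
      exp (2 * π * I * ((l₂ : ℤ) - (l₁ : ℤ)) * n / (M * N)) := by
  rw [oddmSum, mul_sum, sum_filter]
  refine sum_congr rfl fun n hn => ?_
  rw [oddmBasis_mul_conj_self, if_congr (shift_mod_modEq_iff hk (mem_range.1 hn)) rfl rfl,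
    ite_mul, zero_mul]

lemma oddmSum_eq_ite {M N k₁ k₂ l₁ l₂ : ℕ} (hk₁ : k₁ < M) (hk₂ : k₂ < M) (hl₁ : l₁ < N)
    (hl₂ : l₂ < N) (i : ℕ) :
    oddmSum M N k₁ k₂ l₁ l₂ i = if k₁ = k₂ ∧ l₁ = l₂ then 1 else 0 := by
  have hM : M ≠ 0 := by omega
  obtain rfl | hk := eq_or_ne k₁ k₂
  · rw [oddmSum_self N l₁ l₂ i hk₁]
    obtain rfl | hl := eq_or_ne l₁ l₂
    · have hN : (N : ℂ) ≠ 0 := by norm_cast; omega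
      simp [sum_filter_modEq_eq_sum_range hM, hN]
    · have hΔ : ¬ (N : ℤ) ∣ (l₂ : ℤ) - l₁ := fun h =>
        hl (by have := Int.eq_zero_of_abs_lt_dvd h (by rw [abs_lt]; omega); omega)
      rw [← Int.cast_sub, sum_filter_modEq_exp_eq_zero hM _ hΔ, mul_zero, if_neg (by tauto)]
  · rw [oddmSum_eq_zero_of_ne l₁ l₂ i hk₁ hk₂ hk, if_neg (by tauto)]

theorem oddm_nonselective_general (M N : ℕ)
    (k₁ k₂ l₁ l₂ : ℕ) (hk₁ : k₁ < M) (hk₂ : k₂ < M) (hl₁ : l₁ < N) (hl₂ : l₂ < N) :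
    ∀ i j, i < M * N → j < M * N →
      oddmSum M N k₁ k₂ l₁ l₂ i = oddmSum M N k₁ k₂ l₁ l₂ j := by
  intro i j _ _
  rw [oddmSum_eq_ite hk₁ hk₂ hl₁ hl₂, oddmSum_eq_ite hk₁ hk₂ hl₁ hl₂]

/-- Non-selectivity of ODDM: the sum `S_i` does not depend on the carrier
index `i`. -/
theorem oddm_nonselective (M N : ℕ) (hM : 2 ≤ M) (hN : 0 < N)
    (k₁ k₂ l₁ l₂ : ℕ) (hk₁ : k₁ < M) (hk₂ : k₂ < M) (hl₁ : l₁ < N) (hl₂ : l₂ < N) :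
    ∀ i j, i < M * N → j < M * N →
      oddmSum M N k₁ k₂ l₁ l₂ i = oddmSum M N k₁ k₂ l₁ l₂ j :=
  oddm_nonselective_general M N k₁ k₂ l₁ l₂ hk₁ hk₂ hl₁ hl₂
end
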